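/- Fix q ∈ (1/3, 2/3) and let δ* = min{4/q², 4/(1−q)²}. Let g(x) = x·(1 − δ·(1−x)·(x−q)). Then 2/(q·(1−q)) < δ*, and for every δ ∈ (2/(q·(1−q)), δ*) the Nash equilibrium q is a repelling fixed point of g (indeed |g'(q)| = |1 − δ·q·(1−q)| > 1), and the set of x ∈ (0,1) whose orbit under g converges to q is countable. -/

import Mathlib

/-!
Writing `g = f^II_{δ,q}`, we have `g x - q = (x - q) (1 - δ x (1 - x))` and `δ q (1 - q) > 2`,
so near `q` the map `g` multiplies the distance to `q` by a factor `> 1`, and every orbit other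
than the fixed one leaves a small ball around `q`. An orbit converging to `q` must therefore land
exactly on `q`, so the set in question lies in `⋃ n, g^[n] ⁻¹' {q}`, which is countable because
the fibres of the cubic `g` are finite.
-/

open Filter

/-- A fixed point `p` of a map `f` of the unit interval `[0,1]` is *repelling*
if there is an open neighborhood `U` of `p` (relative to `[0,1]`) such that every
orbit starting in `U \ {p}` eventually leaves `U`. -/
def IsRepellingFixedPt (f : ℝ → ℝ) (p : ℝ) : Prop :=
  ∃ U : Set ℝ, IsOpen U ∧ p ∈ U ∧
    ∀ y ∈ U ∩ Set.Icc (0:ℝ) 1, y ≠ p → ∃ n : ℕ, f^[n] y ∉ U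

open Metric Topology

theorem Set.Finite.preimage_iterate {α : Type*} {f : α → α} {s : Set α}
    (hf : ∀ b, (f ⁻¹' {b}).Finite) (hs : s.Finite) (n : ℕ) : (f^[n] ⁻¹' s).Finite := by
  induction n with
  | zero => exact hs
  | succ n ih =>
    rw [Function.iterate_succ, Set.preimage_comp]
    exact ih.preimage' fun b _ => hf b

section Expanding

variable {α : Type*} [MetricSpace α] {f : α → α} {p : α} {r c : ℝ}

theorem exists_iterate_notMem_ball_of_expanding (hc : 1 < c)
    (hexp : ∀ x ∈ ball p r, c * dist x p ≤ dist (f x) p) {y : α} (hyp : y ≠ p) :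
    ∃ n, f^[n] y ∉ ball p r := by
  by_contra! hstay
  have hgrow : ∀ n : ℕ, c ^ n * dist y p ≤ dist (f^[n] y) p := by
    intro n
    induction n with
    | zero => simp
    | succ n ih =>
      rw [Function.iterate_succ_apply', pow_succ', mul_assoc]
      exact (mul_le_mul_of_nonneg_left ih (by linarith)).trans (hexp _ (hstay n))
  obtain ⟨n, hn⟩ := pow_unbounded_of_one_lt (r / dist y p) hc
  rw [div_lt_iff₀ (dist_pos.mpr hyp)] at hn
  linarith [hgrow n, mem_ball.mp (hstay n)]

theorem exists_iterate_eq_of_tendsto_of_expanding (hc : 1 < c) (hr : 0 < r)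
    (hexp : ∀ x ∈ ball p r, c * dist x p ≤ dist (f x) p) {x : α}
    (hx : Tendsto (fun n => f^[n] x) atTop (𝓝 p)) : ∃ n, f^[n] x = p := by
  obtain ⟨N, hN⟩ := eventually_atTop.mp (hx (ball_mem_nhds p hr))
  refine ⟨N, by_contra fun hne => ?_⟩
  obtain ⟨n, hn⟩ := exists_iterate_notMem_ball_of_expanding hc hexp hne
  rw [← Function.iterate_add_apply] at hn
  exact hn (hN (n + N) (Nat.le_add_left N n))

end Expanding

/-- The map `f^II_{δ,q}` of the paper. -/
def ppiMap (δ q x : ℝ) : ℝ := x * (1 - δ * (1 - x) * (x - q))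

theorem ppiMap_sub_self (δ q x : ℝ) :
    ppiMap δ q x - q = (x - q) * (1 - δ * x * (1 - x)) := by
  unfold ppiMap; ring

theorem hasDerivAt_ppiMap (δ q : ℝ) :
    HasDerivAt (ppiMap δ q) (1 - δ * q * (1 - q)) q := by
  have h := (hasDerivAt_id' q).mul ((((hasDerivAt_const q δ).mul
    ((hasDerivAt_const q 1).sub (hasDerivAt_id' q))).mul
    ((hasDerivAt_id' q).sub_const q)).const_sub 1)
  exact h.congr_deriv (by simp only [Pi.mul_apply, Pi.sub_apply]; ring)

open Polynomial in
theorem finite_ppiMap_preimage_singleton {δ : ℝ} (hδ : δ ≠ 0) (q c : ℝ) :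
    (ppiMap δ q ⁻¹' {c}).Finite := by
  let P : Cubic ℝ := ⟨δ, -(δ * (1 + q)), 1 + δ * q, -c⟩
  refine (finite_setOfPred_isRoot (Cubic.ne_zero_of_a_ne_zero (P := P) hδ)).subset fun x hx => ?_
  simp only [Set.mem_preimage, Set.mem_singleton_iff, ppiMap] at hx
  simp only [Set.mem_ofPred_eq, IsRoot, Cubic.toPoly, P, eval_add, eval_mul, eval_pow, eval_C,
    eval_X]
  linear_combination hx

theorem exists_ball_expanding_ppiMap {δ q : ℝ} (h : 2 < δ * q * (1 - q)) :
    ∃ r > 0, ∀ x ∈ ball q r,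
      δ * q * (1 - q) / 2 * dist x q ≤ dist (ppiMap δ q x) q := by
  have hcont : Continuous fun x : ℝ => δ * x * (1 - x) := by fun_prop
  have hnear : ∀ᶠ x in 𝓝 q, 1 + δ * q * (1 - q) / 2 < δ * x * (1 - x) :=
    (hcont.tendsto q).eventually (lt_mem_nhds (by linarith))
  obtain ⟨r, hr, hball⟩ := eventually_nhds_iff_ball.mp hnear
  refine ⟨r, hr, fun x hx => ?_⟩
  have hfactor : δ * q * (1 - q) / 2 ≤ |1 - δ * x * (1 - x)| := by
    rw [abs_sub_comm]
    exact (show _ ≤ δ * x * (1 - x) - 1 by linarith [hball x hx]).trans (le_abs_self _)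
  rw [Real.dist_eq, Real.dist_eq, ppiMap_sub_self, abs_mul, mul_comm]
  exact mul_le_mul_of_nonneg_left hfactor (abs_nonneg _)

theorem two_div_mul_one_sub_lt_min_four_div_sq {q : ℝ} (hq : q ∈ Set.Ioo (1/3:ℝ) (2/3)) :
    2 / (q * (1 - q)) < min (4 / q ^ 2) (4 / (1 - q) ^ 2) := by
  obtain ⟨hq₁, hq₂⟩ := hq
  have hq₀ : 0 < q * (1 - q) := mul_pos (by linarith) (by linarith)
  refine lt_min ?_ ?_
  · rw [div_lt_div_iff₀ hq₀ (pow_pos (by linarith) 2)]; nlinarith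
  · rw [div_lt_div_iff₀ hq₀ (pow_pos (by linarith) 2)]; nlinarith

/-- Fix `q ∈ (1/3, 2/3)` and let `δ* = min {4/q², 4/(1−q)²}`, and
`g_δ x = x * (1 − δ*(1−x)*(x−q))`.  Then `2/(q(1−q)) < δ*`, and for every
`δ ∈ (2/(q(1−q)), δ*)`: the Nash equilibrium `q` is a repelling fixed point of
`g_δ` (indeed `g_δ'(q) = 1 − δq(1−q)` with `|1 − δq(1−q)| > 1`), and the set of
`x ∈ (0,1)` whose orbit under `g_δ` converges to `q` is countable. -/
theorem ppi_instability_middle_equilibria (q : ℝ) (hq : q ∈ Set.Ioo (1/3:ℝ) (2/3))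
    (g : ℝ → ℝ → ℝ)
    (hg : ∀ δ x : ℝ, g δ x = x * (1 - δ * (1 - x) * (x - q))) :
    2 / (q * (1 - q)) < min (4 / q ^ 2) (4 / (1 - q) ^ 2) ∧
    ∀ δ ∈ Set.Ioo (2 / (q * (1 - q))) (min (4 / q ^ 2) (4 / (1 - q) ^ 2)),
      (HasDerivAt (g δ) (1 - δ * q * (1 - q)) q ∧ 1 < |1 - δ * q * (1 - q)|) ∧
      IsRepellingFixedPt (g δ) q ∧
      Set.Countable {x ∈ Set.Ioo (0:ℝ) 1 |
        Tendsto (fun n : ℕ => (g δ)^[n] x) atTop (nhds q)} := by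
  refine ⟨two_div_mul_one_sub_lt_min_four_div_sq hq, fun δ ⟨hδ, _⟩ => ?_⟩
  have hgδ : g δ = ppiMap δ q := funext (hg δ)
  have hA : 2 < δ * q * (1 - q) := by
    have hq₀ : 0 < q * (1 - q) := mul_pos (by linarith [hq.1]) (by linarith [hq.2])
    rw [div_lt_iff₀ hq₀] at hδ; linarith
  obtain ⟨r, hr, hexp⟩ := exists_ball_expanding_ppiMap hA
  have hc : 1 < δ * q * (1 - q) / 2 := by linarith
  rw [hgδ]
  refine ⟨⟨hasDerivAt_ppiMap δ q, ?_⟩, ⟨ball q r, isOpen_ball, mem_ball_self hr,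
    fun _ _ hyq => exists_iterate_notMem_ball_of_expanding hc hexp hyq⟩, ?_⟩
  · rw [abs_sub_comm, lt_abs]; left; linarith
  · have hδ₀ : δ ≠ 0 := by rintro rfl; linarith
    refine Set.Countable.mono (fun x hx => Set.mem_iUnion.mpr
      (exists_iterate_eq_of_tendsto_of_expanding hc hr hexp hx.2))
      (Set.countable_iUnion fun n => Set.Finite.countable ?_)
    exact (Set.finite_singleton q).preimage_iterate (finite_ppiMap_preimage_singleton hδ₀ q) n
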